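/- arXiv:0909.1967 — 3 statements merged into one kernel-verified Lean document; each statement's English description precedes it below -/
import Mathlib

section
/- For integers n ≥ 2, 1 ≤ k ≤ n-1, the function F(r) = (1 - (sin r)^{2n}) / sqrt((1 + (sin r)^{2n})² + ((n-2k)²/(k(n-k)))·(sin r)^{2n}) is strictly decreasing on (0, π/2). -/
open Real

theorem stmt_10 (n k : ℕ) (hn : 2 ≤ n) (hk : 1 ≤ k) (hk' : k ≤ n - 1) :
    StrictAntiOn (fun r : ℝ => (1 - sin r ^ (2*n)) /
        Real.sqrt ((1 + sin r ^ (2*n))^2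
          + (((n:ℝ) - 2*(k:ℝ))^2/((k:ℝ)*((n:ℝ) - (k:ℝ)))) * sin r ^ (2*n)))
      (Set.Ioo 0 (π/2)) := by
  intro a ha b hb hab
  obtain ⟨ha0, ha1⟩ := ha
  obtain ⟨hb0, hb1⟩ := hb
  have hpi := Real.pi_pos
  set c : ℝ := ((n:ℝ) - 2*(k:ℝ))^2/((k:ℝ)*((n:ℝ) - (k:ℝ))) with hc
  have hknN : k < n := lt_of_le_of_lt hk' (Nat.sub_lt (by omega) one_pos)
  have hkn : (k:ℝ) < n := by exact_mod_cast hknN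
  have hk0 : (0:ℝ) < k := by exact_mod_cast hk
  have hc0 : 0 ≤ c := div_nonneg (sq_nonneg _) (mul_nonneg hk0.le (by linarith))
  have hsa0 : 0 < Real.sin a := Real.sin_pos_of_pos_of_lt_pi ha0 (by linarith)
  have hmema : a ∈ Set.Icc (-(π/2)) (π/2) := ⟨by linarith, ha1.le⟩
  have hmemb : b ∈ Set.Icc (-(π/2)) (π/2) := ⟨by linarith, hb1.le⟩
  have hmemt : (π/2) ∈ Set.Icc (-(π/2)) (π/2) := ⟨by linarith, le_refl _⟩
  have hsab : Real.sin a < Real.sin b := Real.strictMonoOn_sin hmema hmemb hab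
  have hsb1 : Real.sin b < 1 := by
    have := Real.strictMonoOn_sin hmemb hmemt hb1
    simpa using this
  set x : ℝ := Real.sin a ^ (2*n) with hx
  set y : ℝ := Real.sin b ^ (2*n) with hy
  have hx0 : 0 < x := pow_pos hsa0 _
  have hxy : x < y := pow_lt_pow_left₀ hsab hsa0.le (by omega)
  have hy1 : y < 1 := pow_lt_one₀ (by linarith) hsb1 (by omega)
  have hDx : 0 < (1+x)^2 + c*x := by positivity
  have hDy : 0 < (1+y)^2 + c*y := by nlinarith
  have h1 : 0 < (y - x) * (1 - x*y) := by
    apply mul_pos (by linarith)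
    nlinarith
  have key : (1-y)^2 * ((1+x)^2 + c*x) < (1-x)^2 * ((1+y)^2 + c*y) := by
    nlinarith [mul_nonneg hc0 h1.le, h1]
  show (1-y) / Real.sqrt ((1+y)^2 + c*y) < (1-x) / Real.sqrt ((1+x)^2 + c*x)
  have e1 : (1-y) * Real.sqrt ((1+x)^2 + c*x)
      = Real.sqrt ((1-y)^2 * ((1+x)^2 + c*x)) := by
    rw [Real.sqrt_mul (sq_nonneg _), Real.sqrt_sq (by linarith)]
  have e2 : (1-x) * Real.sqrt ((1+y)^2 + c*y)
      = Real.sqrt ((1-x)^2 * ((1+y)^2 + c*y)) := by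
    rw [Real.sqrt_mul (sq_nonneg _), Real.sqrt_sq (by linarith)]
  rw [div_lt_div_iff₀ (Real.sqrt_pos.2 hDy) (Real.sqrt_pos.2 hDx), e1, e2]
  exact Real.sqrt_lt_sqrt (by positivity) key
end

section
/- For integers n ≥ 2 and 1 ≤ k ≤ n-1, there exists a constant C > 0 such that for all sufficiently small r > 0, 1 - (1 - (sin r)^{2n}) / sqrt((1 + (sin r)^{2n})² + ((n-2k)²/(k(n-k)))·(sin r)^{2n}) ≤ C·r^{2n}. -/
open Real

lemma key_bound (A s : ℝ) (hA : 0 ≤ A) (hs : 0 ≤ s) (hs1 : s ≤ 1) :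
    1 - (1 - s) / Real.sqrt ((1 + s)^2 + A * s) ≤ (4 + A) * s := by
  set Q : ℝ := (1 + s)^2 + A * s with hQdef
  have hQ1 : 1 ≤ Q := by nlinarith
  have hQ0 : 0 < Q := by linarith
  have hsqrt1 : 1 ≤ Real.sqrt Q := by
    rw [show (1:ℝ) = Real.sqrt 1 from (Real.sqrt_one).symm]
    exact Real.sqrt_le_sqrt hQ1
  have hsqrtpos : 0 < Real.sqrt Q := lt_of_lt_of_le one_pos hsqrt1
  have hup : Real.sqrt Q ≤ 1 + (3 + A) * s := by
    have h1 : Q ≤ (1 + (3 + A) * s)^2 := by nlinarith [mul_nonneg hA hs, sq_nonneg (A*s), mul_nonneg (mul_nonneg hA hA) (mul_nonneg hs hs), mul_nonneg hA (mul_nonneg hs hs)]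
    calc Real.sqrt Q ≤ Real.sqrt ((1 + (3 + A) * s)^2) := Real.sqrt_le_sqrt h1
      _ = 1 + (3 + A) * s := Real.sqrt_sq (by nlinarith)
  rw [sub_le_iff_le_add, ← sub_le_iff_le_add', le_div_iff₀ hsqrtpos]
  rcases le_or_gt (1 - (4 + A) * s) 0 with h | h
  · have : (1 - (4 + A) * s) * Real.sqrt Q ≤ 0 :=
      mul_nonpos_of_nonpos_of_nonneg h hsqrtpos.le
    linarith
  · calc (1 - (4 + A) * s) * Real.sqrt Q
        ≤ (1 - (4 + A) * s) * (1 + (3 + A) * s) := by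
          exact mul_le_mul_of_nonneg_left hup h.le
      _ ≤ 1 - s := by nlinarith

theorem stmt_11 (n k : ℕ) (hn : 2 ≤ n) (hk : 1 ≤ k) (hk' : k ≤ n - 1) :
    ∃ C > (0:ℝ), ∃ δ > (0:ℝ), ∀ r : ℝ, 0 < r → r < δ →
      1 - (1 - sin r ^ (2*n)) /
            Real.sqrt ((1 + sin r ^ (2*n))^2
              + (((n:ℝ) - 2*(k:ℝ))^2/((k:ℝ)*((n:ℝ) - (k:ℝ)))) * sin r ^ (2*n))
        ≤ C * r ^ (2*n) := by
  set A : ℝ := ((n:ℝ) - 2*(k:ℝ))^2/((k:ℝ)*((n:ℝ) - (k:ℝ))) with hAdef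
  have hkn : k < n := by omega
  have hden : (0:ℝ) < (k:ℝ) * ((n:ℝ) - (k:ℝ)) := by
    have h1 : (0:ℝ) < (k:ℝ) := by exact_mod_cast hk
    have h2 : (k:ℝ) < (n:ℝ) := by exact_mod_cast hkn
    nlinarith
  have hA : 0 ≤ A := div_nonneg (sq_nonneg _) hden.le
  refine ⟨4 + A, by linarith, 1, one_pos, fun r hr hr1 => ?_⟩
  have hrπ : r ≤ π := le_trans hr1.le (by linarith [Real.pi_gt_three])
  have hsin0 : 0 ≤ sin r := Real.sin_nonneg_of_nonneg_of_le_pi hr.le hrπ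
  have hsin1 : sin r ≤ 1 := Real.sin_le_one r
  have hs0 : 0 ≤ sin r ^ (2*n) := pow_nonneg hsin0 _
  have hs1 : sin r ^ (2*n) ≤ 1 := pow_le_one₀ hsin0 hsin1
  have hsr : sin r ^ (2*n) ≤ r ^ (2*n) :=
    pow_le_pow_left₀ hsin0 (Real.sin_le hr.le) _
  calc 1 - (1 - sin r ^ (2*n)) /
          Real.sqrt ((1 + sin r ^ (2*n))^2 + A * sin r ^ (2*n))
      ≤ (4 + A) * sin r ^ (2*n) := key_bound A _ hA hs0 hs1
    _ ≤ (4 + A) * r ^ (2*n) := by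
        exact mul_le_mul_of_nonneg_left hsr (by linarith)
end

section
/- For integers n ≥ 2 and 1 ≤ k ≤ n-1, define G(r) = (1 - (sin r)^{n}) / sqrt((1 + (sin r)^{n})² + ((n-2k)²/(k(n-k)))·(sin r)^{n}) for r ∈ (0, π/2). Then there exists a constant C > 0 such that G(r) ≤ C·(π/2 - r)² for all r sufficiently close to π/2. -/
open Real

theorem stmt_14 (n k : ℕ) (hn : 2 ≤ n) (hk : 1 ≤ k) (hk' : k ≤ n - 1)
    (G : ℝ → ℝ)
    (hG : G = fun r => (1 - sin r ^ n) /
        Real.sqrt ((1 + sin r ^ n)^2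
          + (((n:ℝ) - 2*(k:ℝ))^2/((k:ℝ)*((n:ℝ) - (k:ℝ)))) * sin r ^ n)) :
    ∃ C > (0:ℝ), ∃ δ > (0:ℝ), ∀ r : ℝ, π/2 - δ < r → r < π/2 →
      G r ≤ C * (π/2 - r)^2 := by
  refine ⟨(n : ℝ), by positivity, π/2, by positivity, fun r hr1 hr2 => ?_⟩
  have hr0 : 0 < r := by linarith
  have hs0 : 0 ≤ sin r := Real.sin_nonneg_of_nonneg_of_le_pi hr0.le (by linarith [pi_pos])
  have hs1 : sin r ≤ 1 := Real.sin_le_one r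
  have hsn0 : 0 ≤ sin r ^ n := pow_nonneg hs0 n
  have hsn1 : sin r ^ n ≤ 1 := pow_le_one₀ hs0 hs1
  -- coefficient nonneg
  have hkn : (k : ℝ) < (n : ℝ) := by
    have : k < n := lt_of_le_of_lt hk' (Nat.sub_lt (by omega) one_pos)
    exact_mod_cast this
  have hk0 : (0:ℝ) < k := by exact_mod_cast hk
  have hc : 0 ≤ (((n:ℝ) - 2*(k:ℝ))^2/((k:ℝ)*((n:ℝ) - (k:ℝ)))) := by
    apply div_nonneg (sq_nonneg _)
    have : (0:ℝ) < (n:ℝ) - (k:ℝ) := by linarith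
    positivity
  set A : ℝ := (1 + sin r ^ n)^2 + (((n:ℝ) - 2*(k:ℝ))^2/((k:ℝ)*((n:ℝ) - (k:ℝ)))) * sin r ^ n
  have hA1 : 1 ≤ A := by
    have h1 : (1:ℝ) ≤ (1 + sin r ^ n)^2 := by nlinarith
    have h2 := mul_nonneg hc hsn0
    show (1:ℝ) ≤ (1 + sin r ^ n)^2 + _
    linarith
  have hsqrt1 : 1 ≤ Real.sqrt A := by
    rw [show (1:ℝ) = Real.sqrt 1 by simp]
    exact Real.sqrt_le_sqrt hA1
  have hGle : G r ≤ 1 - sin r ^ n := by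
    rw [hG]
    exact div_le_self (by linarith) hsqrt1
  -- 1 - x^n ≤ n (1 - x) by Bernoulli
  have hbern : 1 - sin r ^ n ≤ (n:ℝ) * (1 - sin r) := by
    have := one_add_mul_le_pow (a := sin r - 1) (by linarith) n
    have h : sin r ^ n = (1 + (sin r - 1))^n := by ring_nf
    nlinarith [this]
  -- 1 - sin r ≤ (π/2 - r)^2 / 2
  set t : ℝ := π/2 - r with ht
  have ht0 : 0 < t := by simp [ht]; linarith
  have hcos : sin r = Real.cos t := by rw [ht, Real.cos_pi_div_two_sub]
  have h1c : 1 - sin r ≤ t^2 / 2 := by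
    have hc2 := Real.cos_sq (t/2)
    have hs2 := Real.sin_sq (t/2)
    have hid : Real.cos t = 1 - 2 * Real.sin (t/2) ^ 2 := by
      have : 2 * (t/2) = t := by ring
      rw [this] at hc2
      linarith
    have hle : Real.sin (t/2) ≤ t/2 := Real.sin_le (by linarith)
    have hge : 0 ≤ Real.sin (t/2) := by
      apply Real.sin_nonneg_of_nonneg_of_le_pi (by linarith)
      linarith [pi_pos, hr0]
    have hsq : Real.sin (t/2) ^ 2 ≤ (t/2)^2 := by nlinarith
    have h4 : (t/2)^2 = t^2/4 := by ring
    rw [hcos, hid]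
    linarith
  have : G r ≤ (n:ℝ) * (t^2/2) := by
    calc G r ≤ 1 - sin r ^ n := hGle
    _ ≤ (n:ℝ) * (1 - sin r) := hbern
    _ ≤ (n:ℝ) * (t^2/2) := by
        apply mul_le_mul_of_nonneg_left h1c (by positivity)
  calc G r ≤ (n:ℝ) * (t^2/2) := this
  _ ≤ (n:ℝ) * t^2 := by
      have hn0 : (0:ℝ) ≤ (n:ℝ) := Nat.cast_nonneg n
      nlinarith [sq_nonneg t, mul_nonneg hn0 (sq_nonneg t)]
end
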